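/- Let (g,R,P,S) be an admissible quadruple for the differential problem in ℝⁿ on [a,b] in which g is positive definite. Then the set of (P,S)-focal instants in (a,b] is finite. -/

import Mathlib

open Set

/-- The `g`-orthogonal complement of `P` in `ℝⁿ`. -/
def gOrtho {n : ℕ} (g : (Fin n → ℝ) →ₗ[ℝ] (Fin n → ℝ) →ₗ[ℝ] ℝ)
    (P : Submodule ℝ (Fin n → ℝ)) : Set (Fin n → ℝ) :=
  {x | ∀ p ∈ P, g x p = 0}

/-- A `(P,S)`-solution: a `C²` map `J : [a,b] → ℝⁿ` with `J'' = R(t) J` on `[a,b]`,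
`J(a) ∈ P` and `J'(a) + S[J(a)] ∈ P^⊥`. -/
def IsPSSolution {n : ℕ} (g : (Fin n → ℝ) →ₗ[ℝ] (Fin n → ℝ) →ₗ[ℝ] ℝ)
    (R : ℝ → (Fin n → ℝ) →L[ℝ] (Fin n → ℝ))
    (P : Submodule ℝ (Fin n → ℝ)) (S : (Fin n → ℝ) →ₗ[ℝ] (Fin n → ℝ))
    (a b : ℝ) (J : ℝ → Fin n → ℝ) : Prop :=
  ContDiffOn ℝ 2 J (Icc a b) ∧
  (∀ t ∈ Icc a b, derivWithin (derivWithin J (Icc a b)) (Icc a b) t = R t (J t)) ∧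
  J a ∈ P ∧ (derivWithin J (Icc a b) a + S (J a)) ∈ gOrtho g P

/-- `t` is a `(P,S)`-focal instant: some nonzero `(P,S)`-solution vanishes at `t`. -/
def IsFocal {n : ℕ} (g : (Fin n → ℝ) →ₗ[ℝ] (Fin n → ℝ) →ₗ[ℝ] ℝ)
    (R : ℝ → (Fin n → ℝ) →L[ℝ] (Fin n → ℝ))
    (P : Submodule ℝ (Fin n → ℝ)) (S : (Fin n → ℝ) →ₗ[ℝ] (Fin n → ℝ))
    (a b : ℝ) (t : ℝ) : Prop :=
  ∃ J : ℝ → Fin n → ℝ, IsPSSolution g R P S a b J ∧ (∃ s ∈ Icc a b, J s ≠ 0) ∧ J t = 0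

/-- `𝕁[t] = {J(t) : J a (P,S)-solution}`. -/
def solSpace {n : ℕ} (g : (Fin n → ℝ) →ₗ[ℝ] (Fin n → ℝ) →ₗ[ℝ] ℝ)
    (R : ℝ → (Fin n → ℝ) →L[ℝ] (Fin n → ℝ))
    (P : Submodule ℝ (Fin n → ℝ)) (S : (Fin n → ℝ) →ₗ[ℝ] (Fin n → ℝ))
    (a b : ℝ) (t : ℝ) : Set (Fin n → ℝ) :=
  {v | ∃ J : ℝ → Fin n → ℝ, IsPSSolution g R P S a b J ∧ J t = v}

/-! Modulo functions vanishing on `[a, b]`, the `(P,S)`-solutions form a finite-dimensional space,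
spanned by solutions `K₁, …, Kₘ` with linearly independent initial data. If focal instants `tⱼ`
accumulated at `t₀`, unit coefficient vectors `cⱼ` with `∑ cⱼᵢ Kᵢ` vanishing at `tⱼ` would converge
to a unit vector `c`, and `J = ∑ cᵢ Kᵢ` would vanish at `t₀`. The difference quotients of the
`∑ cⱼᵢ Kᵢ` between `t₀` and `tⱼ` tend to `J'(t₀)`, yet each is `g`-orthogonal to `J'(t₀)`: the form
`g(J', K) - g(J, K')` vanishes identically on pairs of `(P,S)`-solutions, and `J(t₀) = 0`. Hence
`g(J'(t₀), J'(t₀)) = 0`, so `J'(t₀) = 0` by positivity, `J ≡ 0` by uniqueness for the Jacobi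
equation, and `c = 0`, a contradiction. -/

open Filter Topology

theorem eqOn_zero_of_hasDerivWithinAt_clm_apply {E : Type*} [NormedAddCommGroup E]
    [NormedSpace ℝ E] {A : ℝ → E →L[ℝ] E} {f : ℝ → E} {a b t₀ : ℝ}
    (hA : ContinuousOn A (Icc a b))
    (hf : ∀ t ∈ Icc a b, HasDerivWithinAt f (A t (f t)) (Icc a b) t)
    (ht₀ : t₀ ∈ Icc a b) (hf₀ : f t₀ = 0) : EqOn f 0 (Icc a b) := by
  obtain ⟨C, hC⟩ := isCompact_Icc.exists_bound_of_continuousOn hA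
  have hlip : ∀ t ∈ Icc a b, LipschitzOnWith C.toNNReal (A t) univ := fun t ht =>
    ((A t).lipschitzWith_of_opNorm_le ((hC t ht).trans (Real.le_coe_toNNReal C))).lipschitzOnWith
  have hfc : ContinuousOn f (Icc a b) := fun t ht => (hf t ht).continuousWithinAt
  have hzero : ∀ t (s : Set ℝ), HasDerivWithinAt (0 : ℝ → E) (A t ((0 : ℝ → E) t)) s t :=
    fun t s => by simpa using hasDerivWithinAt_zero t s
  rw [← Icc_union_Icc_eq_Icc ht₀.1 ht₀.2]
  refine EqOn.union ?_ ?_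
  · have hsub : Icc a t₀ ⊆ Icc a b := Icc_subset_Icc_right ht₀.2
    exact ODE_solution_unique_of_mem_Icc_left (fun t ht => hlip t (hsub (Ioc_subset_Icc_self ht)))
      (hfc.mono hsub)
      (fun t ht => (hf t (hsub (Ioc_subset_Icc_self ht))).mono_of_mem_nhdsWithin
        (Icc_mem_nhdsLE_of_mem ⟨ht.1, ht.2.trans ht₀.2⟩))
      (fun _ _ => mem_univ _) continuousOn_const (fun t _ => hzero t _) (fun _ _ => mem_univ _) hf₀
  · have hsub : Icc t₀ b ⊆ Icc a b := Icc_subset_Icc_left ht₀.1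
    exact ODE_solution_unique_of_mem_Icc_right (fun t ht => hlip t (hsub (Ico_subset_Icc_self ht)))
      (hfc.mono hsub)
      (fun t ht => (hf t (hsub (Ico_subset_Icc_self ht))).mono_of_mem_nhdsWithin
        (Icc_mem_nhdsGE_of_mem ⟨ht₀.1.trans ht.1, ht.2⟩))
      (fun _ _ => mem_univ _) continuousOn_const (fun t _ => hzero t _) (fun _ _ => mem_univ _) hf₀

section PSSolutions

variable {n : ℕ} {g : (Fin n → ℝ) →ₗ[ℝ] (Fin n → ℝ) →ₗ[ℝ] ℝ}
  {R : ℝ → (Fin n → ℝ) →L[ℝ] (Fin n → ℝ)} {P : Submodule ℝ (Fin n → ℝ)}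
  {S : (Fin n → ℝ) →ₗ[ℝ] (Fin n → ℝ)} {a b t : ℝ} {J K : ℝ → Fin n → ℝ}

namespace IsPSSolution

theorem hasDerivWithinAt (hJ : IsPSSolution g R P S a b J) (ht : t ∈ Icc a b) :
    HasDerivWithinAt J (derivWithin J (Icc a b) t) (Icc a b) t :=
  (hJ.1.differentiableOn two_ne_zero t ht).hasDerivWithinAt

theorem hasDerivWithinAt_derivWithin (hab : a < b) (hJ : IsPSSolution g R P S a b J)
    (ht : t ∈ Icc a b) :
    HasDerivWithinAt (derivWithin J (Icc a b)) (R t (J t)) (Icc a b) t := by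
  have hJ' := hJ.1.derivWithin (m := 1) (uniqueDiffOn_Icc hab) (by norm_num)
  rw [← hJ.2.1 t ht]
  exact (hJ'.differentiableOn one_ne_zero t ht).hasDerivWithinAt

theorem eqOn_zero (hab : a < b) (hRcont : ContinuousOn R (Icc a b))
    (hJ : IsPSSolution g R P S a b J) {t₀ : ℝ} (ht₀ : t₀ ∈ Icc a b) (h₀ : J t₀ = 0)
    (h₁ : derivWithin J (Icc a b) t₀ = 0) : EqOn J 0 (Icc a b) := by
  let A : ℝ → ((Fin n → ℝ) × (Fin n → ℝ)) →L[ℝ] (Fin n → ℝ) × (Fin n → ℝ) := fun t =>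
    (ContinuousLinearMap.inl ℝ _ _).comp (ContinuousLinearMap.snd ℝ _ _) +
      (ContinuousLinearMap.inr ℝ _ _).comp ((R t).comp (ContinuousLinearMap.fst ℝ _ _))
  have hA : ContinuousOn A (Icc a b) :=
    continuousOn_const.add (continuousOn_const.clm_comp (hRcont.clm_comp continuousOn_const))
  have hphase := eqOn_zero_of_hasDerivWithinAt_clm_apply hA
    (f := fun t => (J t, derivWithin J (Icc a b) t))
    (fun t ht => by
      simpa [A] using (hJ.hasDerivWithinAt ht).prodMk (hJ.hasDerivWithinAt_derivWithin hab ht))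
    ht₀ (by simp [h₀, h₁])
  exact fun t ht => congrArg Prod.fst (hphase ht)

theorem add (hab : a < b) (hJ : IsPSSolution g R P S a b J) (hK : IsPSSolution g R P S a b K) :
    IsPSSolution g R P S a b (J + K) := by
  have hd : EqOn (derivWithin (J + K) (Icc a b))
      (derivWithin J (Icc a b) + derivWithin K (Icc a b)) (Icc a b) := fun t ht =>
    ((hJ.hasDerivWithinAt ht).add (hK.hasDerivWithinAt ht)).derivWithin
      (uniqueDiffOn_Icc hab t ht)
  refine ⟨hJ.1.add hK.1, fun t ht => ?_, P.add_mem hJ.2.2.1 hK.2.2.1, fun p hp => ?_⟩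
  · rw [derivWithin_congr hd (hd ht), ((hJ.hasDerivWithinAt_derivWithin hab ht).add
      (hK.hasDerivWithinAt_derivWithin hab ht)).derivWithin (uniqueDiffOn_Icc hab t ht),
      Pi.add_apply, map_add]
  · have hJp := hJ.2.2.2 p hp
    have hKp := hK.2.2.2 p hp
    rw [hd (left_mem_Icc.2 hab.le)]
    simp only [Pi.add_apply, map_add, LinearMap.add_apply] at hJp hKp ⊢
    linarith

theorem const_smul (hab : a < b) (hJ : IsPSSolution g R P S a b J) (c : ℝ) :
    IsPSSolution g R P S a b (c • J) := by
  have hd : EqOn (derivWithin (c • J) (Icc a b)) (c • derivWithin J (Icc a b)) (Icc a b) :=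
    fun t ht => ((hJ.hasDerivWithinAt ht).const_smul c).derivWithin (uniqueDiffOn_Icc hab t ht)
  refine ⟨hJ.1.const_smul c, fun t ht => ?_, P.smul_mem c hJ.2.2.1, fun p hp => ?_⟩
  · rw [derivWithin_congr hd (hd ht), ((hJ.hasDerivWithinAt_derivWithin hab ht).const_smul
      c).derivWithin (uniqueDiffOn_Icc hab t ht), Pi.smul_apply, map_smul]
  · rw [hd (left_mem_Icc.2 hab.le), Pi.smul_apply, Pi.smul_apply, map_smul, ← smul_add,
      map_smul, LinearMap.smul_apply, hJ.2.2.2 p hp, smul_zero]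

theorem zero : IsPSSolution g R P S a b 0 := by
  refine ⟨contDiffOn_const, fun t _ => ?_, P.zero_mem, fun p _ => ?_⟩ <;> simp

end IsPSSolution

variable (g R P S) in
def psSolutions (hab : a < b) : Submodule ℝ (ℝ → Fin n → ℝ) where
  carrier := {J | IsPSSolution g R P S a b J}
  add_mem' hJ hK := hJ.add hab hK
  zero_mem' := IsPSSolution.zero
  smul_mem' c _ hJ := hJ.const_smul hab c

namespace IsPSSolution

theorem sum (hab : a < b) {m : ℕ} {K : Fin m → ℝ → Fin n → ℝ}
    (hK : ∀ i, IsPSSolution g R P S a b (K i)) (c : Fin m → ℝ) :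
    IsPSSolution g R P S a b (∑ i, c i • K i) :=
  (psSolutions g R P S hab).sum_mem fun i _ => Submodule.smul_mem _ (c i) (hK i)

/-- The form `g(J', K) - g(J, K')` is constant along solutions because every `R t` is
`g`-symmetric, and it vanishes at `a` by the boundary conditions and the symmetry of `S`. -/
theorem apply_derivWithin_eq (hab : a < b) (hgsymm : ∀ x y, g x y = g y x)
    (hRsymm : ∀ t ∈ Icc a b, ∀ x y, g (R t x) y = g x (R t y))
    (hSsymm : ∀ x ∈ P, ∀ y ∈ P, g (S x) y = g x (S y))
    (hJ : IsPSSolution g R P S a b J) (hK : IsPSSolution g R P S a b K) (ht : t ∈ Icc a b) :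
    g (derivWithin J (Icc a b) t) (K t) = g (J t) (derivWithin K (Icc a b) t) := by
  let B : (Fin n → ℝ) →L[ℝ] (Fin n → ℝ) →L[ℝ] ℝ :=
    LinearMap.toContinuousLinearMap (LinearMap.toContinuousLinearMap.toLinearMap ∘ₗ g)
  let ω : ℝ → ℝ := fun t =>
    B (derivWithin J (Icc a b) t) (K t) - B (J t) (derivWithin K (Icc a b) t)
  have hω : ∀ t ∈ Icc a b, HasDerivWithinAt ω 0 (Icc a b) t := fun t ht => by
    refine ((B.hasDerivWithinAt_of_bilinear (hJ.hasDerivWithinAt_derivWithin hab ht)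
      (hK.hasDerivWithinAt ht)).sub (B.hasDerivWithinAt_of_bilinear (hJ.hasDerivWithinAt ht)
      (hK.hasDerivWithinAt_derivWithin hab ht))).congr_deriv ?_
    simp only [B, LinearMap.coe_toContinuousLinearMap', LinearMap.coe_comp, LinearEquiv.coe_coe,
      Function.comp_apply, hRsymm t ht]
    ring
  have hωa : ω a = 0 := by
    have hJa := hJ.2.2.2 (K a) hK.2.2.1
    have hKa := hK.2.2.2 (J a) hJ.2.2.1
    have hS := hSsymm (J a) hJ.2.2.1 (K a) hK.2.2.1
    simp only [map_add, LinearMap.add_apply] at hJa hKa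
    simp only [ω, B, LinearMap.coe_toContinuousLinearMap', LinearMap.coe_comp,
      Function.comp_apply, LinearEquiv.coe_coe, hgsymm (J a)]
    rw [hgsymm (J a)] at hS
    linarith
  have hconst := constant_of_has_deriv_right_zero (fun t ht => (hω t ht).continuousWithinAt)
    (fun t ht => (hω t (Ico_subset_Icc_self ht)).mono_of_mem_nhdsWithin
      (Icc_mem_nhdsGE_of_mem ht)) t ht
  simpa [ω, B, sub_eq_zero] using hconst.trans hωa

end IsPSSolution

variable (g R P S) in
noncomputable def initialData (hab : a < b) :
    psSolutions g R P S hab →ₗ[ℝ] (Fin n → ℝ) × (Fin n → ℝ) where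
  toFun J := ((J : ℝ → Fin n → ℝ) a, derivWithin J (Icc a b) a)
  map_add' J K := Prod.ext rfl <|
    ((J.2.hasDerivWithinAt (left_mem_Icc.2 hab.le)).add
      (K.2.hasDerivWithinAt (left_mem_Icc.2 hab.le))).derivWithin
      (uniqueDiffOn_Icc hab a (left_mem_Icc.2 hab.le))
  map_smul' c J := Prod.ext rfl <|
    ((J.2.hasDerivWithinAt (left_mem_Icc.2 hab.le)).const_smul c).derivWithin
      (uniqueDiffOn_Icc hab a (left_mem_Icc.2 hab.le))

theorem initialData_eq_zero_iff (hab : a < b) (hRcont : ContinuousOn R (Icc a b))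
    (J : psSolutions g R P S hab) :
    initialData g R P S hab J = 0 ↔ EqOn (J : ℝ → Fin n → ℝ) 0 (Icc a b) := by
  have ha : a ∈ Icc a b := left_mem_Icc.2 hab.le
  refine ⟨fun h => J.2.eqOn_zero hab hRcont ha (congrArg Prod.fst h) (congrArg Prod.snd h),
    fun h => Prod.ext (h ha) ?_⟩
  change derivWithin (J : ℝ → Fin n → ℝ) (Icc a b) a = 0
  rw [derivWithin_congr h (h ha)]
  simp

theorem exists_fundamental_system (hab : a < b) (hRcont : ContinuousOn R (Icc a b)) :
    ∃ (m : ℕ) (K : Fin m → ℝ → Fin n → ℝ), (∀ i, IsPSSolution g R P S a b (K i)) ∧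
      (∀ J, IsPSSolution g R P S a b J → ∃ c : Fin m → ℝ, EqOn J (∑ i, c i • K i) (Icc a b)) ∧
      ∀ c : Fin m → ℝ, EqOn (∑ i, c i • K i) 0 (Icc a b) → c = 0 := by
  let L := initialData g R P S hab
  let bas := Module.finBasis ℝ (LinearMap.range L)
  let m := Module.finrank ℝ (LinearMap.range L)
  choose K hK using fun i => LinearMap.mem_range.1 (bas i).2
  have hLsum : ∀ c : Fin m → ℝ, L (∑ i, c i • K i) = ∑ i, c i • (bas i : (Fin n → ℝ) × _) := by
    intro c
    simp [hK]
  refine ⟨_, fun i => K i, fun i => (K i).2, fun J hJ => ?_, fun c hc => ?_⟩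
  · let d : LinearMap.range L := ⟨L ⟨J, hJ⟩, LinearMap.mem_range_self L _⟩
    have hdiff : L (⟨J, hJ⟩ - ∑ i, bas.repr d i • K i) = 0 := by
      rw [map_sub, hLsum, sub_eq_zero]
      have hrepr := congrArg Subtype.val (bas.sum_repr d)
      simp only [Submodule.coe_sum, Submodule.coe_smul] at hrepr
      exact hrepr.symm
    refine ⟨bas.repr d, fun t ht => ?_⟩
    simpa [sub_eq_zero] using (initialData_eq_zero_iff hab hRcont _).1 hdiff ht
  · have hLc : L (∑ i, c i • K i) = 0 :=
      (initialData_eq_zero_iff hab hRcont _).2 fun t ht => by simpa using hc ht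
    rw [hLsum] at hLc
    exact funext <| Fintype.linearIndependent_iff.1 bas.linearIndependent c
      (Subtype.ext (by simpa using hLc))

theorem slope_sum_smul {m : ℕ} (K : Fin m → ℝ → Fin n → ℝ) (c : Fin m → ℝ) (s t : ℝ) :
    slope (∑ i, c i • K i) s t = ∑ i, c i • slope (K i) s t := by
  simp only [slope_def_module, Finset.sum_apply, Pi.smul_apply, ← Finset.sum_sub_distrib,
    ← smul_sub, Finset.smul_sum]
  exact Finset.sum_congr rfl fun i _ => smul_comm _ _ _

theorem eqOn_zero_of_tendsto_of_eventually_eq_zero (hab : a < b)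
    (hgsymm : ∀ x y, g x y = g y x) (hRcont : ContinuousOn R (Icc a b))
    (hRsymm : ∀ t ∈ Icc a b, ∀ x y, g (R t x) y = g x (R t y))
    (hSsymm : ∀ x ∈ P, ∀ y ∈ P, g (S x) y = g x (S y))
    (hgpos : ∀ x : Fin n → ℝ, x ≠ 0 → 0 < g x x)
    {m : ℕ} {K : Fin m → ℝ → Fin n → ℝ} (hK : ∀ i, IsPSSolution g R P S a b (K i))
    {ι : Type*} {l : Filter ι} [l.NeBot] {τ : ι → ℝ} {t₀ : ℝ} (ht₀ : t₀ ∈ Icc a b)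
    (hτ : Tendsto τ l (𝓝[Icc a b \ {t₀}] t₀)) {c : ι → Fin m → ℝ} {c₀ : Fin m → ℝ}
    (hc : Tendsto c l (𝓝 c₀)) (hzero : ∀ᶠ j in l, (∑ i, c j i • K i) (τ j) = 0) :
    EqOn (∑ i, c₀ i • K i) 0 (Icc a b) := by
  have hsol := IsPSSolution.sum hab hK
  have hlim : ∀ {V : ι → Fin m → Fin n → ℝ} {V₀ : Fin m → Fin n → ℝ},
      (∀ i, Tendsto (V · i) l (𝓝 (V₀ i))) →
      Tendsto (fun j => ∑ i, c j i • V j i) l (𝓝 (∑ i, c₀ i • V₀ i)) := fun hV =>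
    tendsto_finsetSum _ fun i _ => ((continuous_apply i).continuousAt.tendsto.comp hc).smul (hV i)
  have hvalue : (∑ i, c₀ i • K i) t₀ = 0 := by
    have hτ' := hτ.mono_right (nhdsWithin_mono _ sdiff_subset)
    refine tendsto_nhds_unique ?_ (tendsto_const_nhds.congr' (hzero.mono fun j hj => hj.symm))
    simpa only [Finset.sum_apply, Pi.smul_apply] using
      hlim (V := fun j i => K i (τ j)) fun i => ((hK i).1.continuousOn t₀ ht₀).tendsto.comp hτ'
  set z := derivWithin (∑ i, c₀ i • K i) (Icc a b) t₀
  have hslope : Tendsto (fun j => slope (∑ i, c j i • K i) t₀ (τ j)) l (𝓝 z) := by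
    have hz : z = ∑ i, c₀ i • derivWithin (K i) (Icc a b) t₀ :=
      (HasDerivWithinAt.sum fun i _ => ((hK i).hasDerivWithinAt ht₀).const_smul (c₀ i)).derivWithin
        (uniqueDiffOn_Icc hab t₀ ht₀)
    simpa only [slope_sum_smul, hz] using hlim (V := fun j i => slope (K i) t₀ (τ j)) fun i =>
      (hasDerivWithinAt_iff_tendsto_slope.1 ((hK i).hasDerivWithinAt ht₀)).comp hτ
  have hperp : ∀ᶠ j in l, g (slope (∑ i, c j i • K i) t₀ (τ j)) z = 0 := by
    filter_upwards [hzero] with j hj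
    have hiso := (hsol c₀).apply_derivWithin_eq hab hgsymm hRsymm hSsymm (hsol (c j)) ht₀
    rw [hvalue, map_zero, LinearMap.zero_apply] at hiso
    rw [slope_def_module, hj, zero_sub, map_smul, map_neg, LinearMap.smul_apply,
      LinearMap.neg_apply, hgsymm, hiso, neg_zero, smul_zero]
  have hzz : g z z = 0 := tendsto_nhds_unique
    (((g.flip z).continuous_of_finiteDimensional.tendsto z).comp hslope)
    (tendsto_const_nhds.congr' (hperp.mono fun j hj => hj.symm))
  have hz : z = 0 := by_contra fun hz => (hgpos z hz).ne' hzz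
  exact (hsol c₀).eqOn_zero hab hRcont ht₀ hvalue hz

theorem exists_mem_sphere_sum_smul_eq_zero_of_isFocal {m : ℕ} {K : Fin m → ℝ → Fin n → ℝ}
    (hspan : ∀ J, IsPSSolution g R P S a b J → ∃ c : Fin m → ℝ, EqOn J (∑ i, c i • K i) (Icc a b))
    (ht : t ∈ Ioc a b) (hfocal : IsFocal g R P S a b t) :
    ∃ c ∈ Metric.sphere (0 : Fin m → ℝ) 1, (∑ i, c i • K i) t = 0 := by
  obtain ⟨J, hJ, ⟨s, hs, hJs⟩, hJt⟩ := hfocal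
  obtain ⟨c, hc⟩ := hspan J hJ
  have hc0 : c ≠ 0 := by
    rintro rfl
    exact hJs (by simpa using hc hs)
  refine ⟨‖c‖⁻¹ • c, by simp [norm_smul, hc0], ?_⟩
  rw [hc ⟨ht.1.le, ht.2⟩] at hJt
  simpa [Finset.smul_sum, smul_smul] using congrArg (‖c‖⁻¹ • ·) hJt

end PSSolutions

theorem focal_instants_finite_of_posDef_general {n : ℕ}
    (g : (Fin n → ℝ) →ₗ[ℝ] (Fin n → ℝ) →ₗ[ℝ] ℝ)
    (R : ℝ → (Fin n → ℝ) →L[ℝ] (Fin n → ℝ))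
    (P : Submodule ℝ (Fin n → ℝ)) (S : (Fin n → ℝ) →ₗ[ℝ] (Fin n → ℝ))
    (a b : ℝ) (hab : a < b)
    (hgsymm : ∀ x y, g x y = g y x)
    (hRcont : ContinuousOn R (Icc a b))
    (hRsymm : ∀ t ∈ Icc a b, ∀ x y, g (R t x) y = g x (R t y))
    (hSsymm : ∀ x ∈ P, ∀ y ∈ P, g (S x) y = g x (S y))
    (hgpos : ∀ x : Fin n → ℝ, x ≠ 0 → 0 < g x x) :
    {t : ℝ | t ∈ Ioc a b ∧ IsFocal g R P S a b t}.Finite := by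
  set F := {t : ℝ | t ∈ Ioc a b ∧ IsFocal g R P S a b t}
  have hFI : F ⊆ Icc a b := fun t ht => Ioc_subset_Icc_self ht.1
  obtain ⟨m, K, hK, hspan, hindep⟩ :=
    exists_fundamental_system (g := g) (P := P) (S := S) hab hRcont
  choose! c hc_sphere hc_zero using fun t (ht : t ∈ F) =>
    exists_mem_sphere_sum_smul_eq_zero_of_isFocal (g := g) hspan ht.1 ht.2
  refine Set.not_infinite.1 fun hinf => ?_
  obtain ⟨t₀, ht₀, hacc⟩ := hinf.exists_accPt_of_subset_isCompact isCompact_Icc hFI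
  rw [accPt_principal_iff_nhdsWithin] at hacc
  let U := Ultrafilter.of (𝓝[F \ {t₀}] t₀)
  have hFU : F \ {t₀} ∈ U := Ultrafilter.of_le _ self_mem_nhdsWithin
  obtain ⟨c₀, hc₀, hUc⟩ := (isCompact_sphere (0 : Fin m → ℝ) 1).ultrafilter_le_nhds (U.map c)
    (le_principal_iff.2 (Ultrafilter.mem_map.2 (mem_of_superset hFU fun t ht => hc_sphere t ht.1)))
  have hτ : Tendsto id (U : Filter ℝ) (𝓝[Icc a b \ {t₀}] t₀) :=
    tendsto_id'.2 ((Ultrafilter.of_le _).trans (nhdsWithin_mono _ (sdiff_subset_sdiff_left hFI)))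
  have hzero := eqOn_zero_of_tendsto_of_eventually_eq_zero hab hgsymm hRcont hRsymm hSsymm hgpos
    hK ht₀ hτ hUc (mem_of_superset hFU fun t ht => hc_zero t ht.1)
  exact Metric.ne_of_mem_sphere hc₀ one_ne_zero (hindep c₀ hzero)

/-- If `g` is positive definite, the set of (P,S)-focal instants in `(a,b]` is finite. -/
theorem focal_instants_finite_of_posDef {n : ℕ}
    (g : (Fin n → ℝ) →ₗ[ℝ] (Fin n → ℝ) →ₗ[ℝ] ℝ)
    (R : ℝ → (Fin n → ℝ) →L[ℝ] (Fin n → ℝ))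
    (P : Submodule ℝ (Fin n → ℝ)) (S : (Fin n → ℝ) →ₗ[ℝ] (Fin n → ℝ))
    (a b : ℝ) (hab : a < b)
    (hgsymm : ∀ x y, g x y = g y x)
    (hgnd : ∀ x, (∀ y, g x y = 0) → x = 0)
    (hRcont : ContinuousOn R (Icc a b))
    (hRsymm : ∀ t ∈ Icc a b, ∀ x y, g (R t x) y = g x (R t y))
    (hPnd : ∀ x ∈ P, (∀ y ∈ P, g x y = 0) → x = 0)
    (hSP : ∀ x ∈ P, S x ∈ P)
    (hSsymm : ∀ x ∈ P, ∀ y ∈ P, g (S x) y = g x (S y))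
    (hgpos : ∀ x : Fin n → ℝ, x ≠ 0 → 0 < g x x) :
    {t : ℝ | t ∈ Ioc a b ∧ IsFocal g R P S a b t}.Finite :=
  focal_instants_finite_of_posDef_general g R P S a b hab hgsymm hRcont hRsymm hSsymm hgpos
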